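/- Let (K, Enc, Dec) be a finitary secret-key multi-message code over a finite alphabet Σ with message space M and codeword length n, satisfying correctness for a fixed message μ* ∈ M (Dec(sk, Enc(sk, μ*)) = μ* for every key sk) and soundness error ε_s. Define the derived messageless code (K, Enc', Dec') by Enc'(sk) = Enc(sk, μ*), Dec'(sk, γ) = valid if γ = Enc(sk, μ*), Dec'(sk, γ) = tampered if γ ≠ Enc(sk, μ*) and Dec(sk, γ) = μ*, and Dec'(sk, γ) = invalid otherwise. Then: (a) for every fixed γ̂ ∈ Σ^n, P_sk[Dec'(sk, γ̂) ≠ invalid] ≤ ε_s; and (b) for every (possibly randomized) tampering function f : Σ^n → Σ^n, if the error-correction failure of the original code at μ* against f is at most ε_c, i.e. P[Dec(sk, f(γ)) ≠ μ* ∧ f(γ) ≠ γ] ≤ ε_c with γ = Enc(sk, μ*), then the derived code's tamper-detection failure against f satisfies P[Dec'(sk, f(γ)) ≠ tampered ∧ f(γ) ≠ γ] ≤ ε_c. -/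

import Mathlib

open Finset Classical

/-- Decoding outcomes of a messageless secret-key code. -/
inductive DecOut where
  | valid
  | invalid
  | tampered
deriving DecidableEq

/-- The two non-message decoding outcomes of a multi-message secret-key code. -/
inductive DecFlag where
  | invalid
  | tampered
deriving DecidableEq

/-- The messageless code derived from `Dec` at the codeword `c = Enc(sk, μ)`. -/
noncomputable def derivedDec {T M : Type} [DecidableEq T] (Dec : T → M ⊕ DecFlag) (μ : M) (c γ : T) :
    DecOut :=
  if γ = c then DecOut.valid
  else if Dec γ = Sum.inl μ then DecOut.tampered
  else DecOut.invalid

section DerivedCode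

variable {T M : Type} [DecidableEq T] {Dec : T → M ⊕ DecFlag} {μ : M} {c γ : T}

theorem derivedDec_ne_invalid (hc : Dec c = Sum.inl μ)
    (h : derivedDec Dec μ c γ ≠ DecOut.invalid) : Dec γ ≠ Sum.inr DecFlag.invalid := by
  unfold derivedDec at h
  split_ifs at h with hγ hdec
  · simp [hγ, hc]
  · simp [hdec]
  · exact absurd rfl h

theorem derivedDec_ne_tampered (h : derivedDec Dec μ c γ ≠ DecOut.tampered) (hγ : γ ≠ c) :
    Dec γ ≠ Sum.inl μ := by
  intro hdec
  simp [derivedDec, hγ, hdec] at h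

end DerivedCode

theorem Finset.sum_ite_zero_mono {ι β : Type*} [AddCommMonoid β] [PartialOrder β]
    [IsOrderedAddMonoid β] (s : Finset ι) {p q : ι → Prop} [DecidablePred p] [DecidablePred q]
    {a : ι → β} (ha : ∀ i, 0 ≤ a i) (hpq : ∀ i, p i → q i) :
    (∑ i ∈ s, if p i then a i else 0) ≤ ∑ i ∈ s, if q i then a i else 0 := by
  refine sum_le_sum fun i _ => ?_
  split_ifs with hp hq
  exacts [le_rfl, absurd (hpq i hp) hq, ha i, le_rfl]

/-- A randomized tampering function is modelled by an independent finite randomness source `R`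
with weights `wr`. -/
theorem stmt_7_general
    {S K M R : Type} [DecidableEq S] [Fintype K]
    [Fintype R]
    {n : ℕ}
    (w : K → ℝ) (hw0 : ∀ k, 0 ≤ w k)
    (Enc : K → M → Fin n → S) (Dec : K → (Fin n → S) → M ⊕ DecFlag)
    (μstar : M)
    (hcorr : ∀ k, Dec k (Enc k μstar) = Sum.inl μstar)
    (εs : ℝ)
    (hsound : ∀ γ : Fin n → S,
      (∑ k, if Dec k γ ≠ Sum.inr DecFlag.invalid then w k else 0) ≤ εs)
    (wr : R → ℝ) (hwr0 : ∀ r, 0 ≤ wr r)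
    (f : (Fin n → S) → R → Fin n → S)
    (εc : ℝ)
    (hec :
      (∑ k, ∑ r, if Dec k (f (Enc k μstar) r) ≠ Sum.inl μstar
                    ∧ f (Enc k μstar) r ≠ Enc k μstar
                 then w k * wr r else 0) ≤ εc) :
    (∀ γ : Fin n → S,
      (∑ k, if (if γ = Enc k μstar then DecOut.valid
                else if Dec k γ = Sum.inl μstar then DecOut.tampered
                else DecOut.invalid) ≠ DecOut.invalid
            then w k else 0) ≤ εs) ∧
    ((∑ k, ∑ r, if (if f (Enc k μstar) r = Enc k μstar then DecOut.valid
                    else if Dec k (f (Enc k μstar) r) = Sum.inl μstar then DecOut.tampered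
                    else DecOut.invalid) ≠ DecOut.tampered
                   ∧ f (Enc k μstar) r ≠ Enc k μstar
                then w k * wr r else 0) ≤ εc) := by
  refine ⟨fun γ => ?_, ?_⟩
  · refine le_trans ?_ (hsound γ)
    exact sum_ite_zero_mono _ hw0
      (p := fun k => derivedDec (Dec k) μstar (Enc k μstar) γ ≠ DecOut.invalid)
      fun k => derivedDec_ne_invalid (hcorr k)
  · refine le_trans (sum_le_sum fun k _ => ?_) hec
    exact sum_ite_zero_mono _ (fun r => mul_nonneg (hw0 k) (hwr0 r))
      (p := fun r => derivedDec (Dec k) μstar (Enc k μstar) (f (Enc k μstar) r) ≠ DecOut.tampered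
        ∧ f (Enc k μstar) r ≠ Enc k μstar)
      fun r ⟨h, hγ⟩ => ⟨derivedDec_ne_tampered h hγ, hγ⟩

/-- From a multi-message code correct at a fixed message `μ*` and with
soundness error `εs`, derive the messageless code `Enc'(sk) = Enc(sk, μ*)`,
`Dec'(sk, γ) = valid` if `γ = Enc(sk, μ*)`, `tampered` if `γ ≠ Enc(sk, μ*)` and
`Dec(sk, γ) = μ*`, and `invalid` otherwise. Then (a) the derived code has soundness
error at most `εs`, and (b) for every (possibly randomized) tampering function `f`
(modelled with an independent finite randomness source `R`), if the error-correction
failure of the original code at `μ*` against `f` is at most `εc`, then the derived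
code's tamper-detection failure against `f` is at most `εc`. -/
theorem stmt_7
    {S K M R : Type} [Fintype S] [DecidableEq S] [Fintype K] [Nonempty K]
    [Fintype R] [Nonempty R]
    {n : ℕ} (hn : 1 ≤ n)
    (w : K → ℝ) (hw0 : ∀ k, 0 ≤ w k) (hw1 : ∑ k, w k = 1)
    (Enc : K → M → Fin n → S) (Dec : K → (Fin n → S) → M ⊕ DecFlag)
    (μstar : M)
    (hcorr : ∀ k, Dec k (Enc k μstar) = Sum.inl μstar)
    (εs : ℝ)
    (hsound : ∀ γ : Fin n → S,
      (∑ k, if Dec k γ ≠ Sum.inr DecFlag.invalid then w k else 0) ≤ εs)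
    (wr : R → ℝ) (hwr0 : ∀ r, 0 ≤ wr r) (hwr1 : ∑ r, wr r = 1)
    (f : (Fin n → S) → R → Fin n → S)
    (εc : ℝ)
    (hec :
      (∑ k, ∑ r, if Dec k (f (Enc k μstar) r) ≠ Sum.inl μstar
                    ∧ f (Enc k μstar) r ≠ Enc k μstar
                 then w k * wr r else 0) ≤ εc) :
    (∀ γ : Fin n → S,
      (∑ k, if (if γ = Enc k μstar then DecOut.valid
                else if Dec k γ = Sum.inl μstar then DecOut.tampered
                else DecOut.invalid) ≠ DecOut.invalid
            then w k else 0) ≤ εs) ∧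
    ((∑ k, ∑ r, if (if f (Enc k μstar) r = Enc k μstar then DecOut.valid
                    else if Dec k (f (Enc k μstar) r) = Sum.inl μstar then DecOut.tampered
                    else DecOut.invalid) ≠ DecOut.tampered
                   ∧ f (Enc k μstar) r ≠ Enc k μstar
                then w k * wr r else 0) ≤ εc) :=
  stmt_7_general w hw0 Enc Dec μstar hcorr εs hsound wr hwr0 f εc hec
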